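/- Let c ≥ 0 and 0 < x₁ < x₂, let M : [x₁, x₂] → [0, ∞) be continuous, and let y : [x₁, x₂] → ℝ be twice continuously differentiable with y(x₁) = y(x₂) = 0, y(x) > 0 for all x ∈ (x₁, x₂), y'(x₁) > 0, y'(x₂) < 0, and −y''(x) + ( c/x² )·y(x) = M(x)·y(x) on [x₁, x₂]. Then ∫_{x₁}^{x₂} x·M(x) dx ≥ √(4c + 1). -/

import Mathlib

/-!
Along `z = x y' / y` the equation becomes the Riccati equation
`z' = -x M + ((4c + 1) - (2z - 1)²) / (4x)`, so `z' ≥ -x M` as long as `z` stays in the band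
`|2z - 1| < √(4c + 1)`. Since `z` runs from `+∞` at `x₁` to `-∞` at `x₂`, it has to cross the whole
band, of width `√(4c + 1)`, on some subinterval, and this costs `∫ x M ≥ √(4c + 1)`.
-/

open Set Filter MeasureTheory Topology

section Quotient

variable {𝕜 α : Type*} [Field 𝕜] [LinearOrder 𝕜] [IsStrictOrderedRing 𝕜]
  [TopologicalSpace 𝕜] [OrderTopology 𝕜] {l : Filter α} {f g : α → 𝕜} {C : 𝕜}

theorem Filter.Tendsto.div_nhdsGT_zero_atTop (hC : 0 < C) (hf : Tendsto f l (𝓝 C))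
    (hg : Tendsto g l (𝓝[>] 0)) : Tendsto (fun x => f x / g x) l atTop := by
  simpa only [div_eq_mul_inv, Function.comp_def] using
    hf.pos_mul_atTop hC (tendsto_inv_nhdsGT_zero.comp hg)

theorem Filter.Tendsto.div_nhdsGT_zero_atBot (hC : C < 0) (hf : Tendsto f l (𝓝 C))
    (hg : Tendsto g l (𝓝[>] 0)) : Tendsto (fun x => f x / g x) l atBot := by
  simpa only [div_eq_mul_inv, Function.comp_def] using
    hf.neg_mul_atTop hC (tendsto_inv_nhdsGT_zero.comp hg)

end Quotient

theorem exists_Ioo_mapsTo_Ioo_of_continuousOn {f : ℝ → ℝ} {a b p q : ℝ} (hab : a ≤ b)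
    (hf : ContinuousOn f (Icc a b)) (hqp : q < p) (ha : p ≤ f a) (hb : f b ≤ q) :
    ∃ a' b', a ≤ a' ∧ a' < b' ∧ b' ≤ b ∧ p ≤ f a' ∧ f b' ≤ q ∧
      MapsTo f (Ioo a' b') (Ioo q p) := by
  obtain ⟨b', ⟨⟨hab', hb'b⟩, hqb'⟩, hb'_least⟩ : ∃ b', IsLeast (Icc a b ∩ f ⁻¹' Iic q) b' :=
    (isCompact_Icc.of_isClosed_subset (hf.preimage_isClosed_of_isClosed isClosed_Icc isClosed_Iic)
      inter_subset_left).exists_isLeast ⟨b, right_mem_Icc.2 hab, hb⟩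
  have hcont' : ContinuousOn f (Icc a b') := hf.mono (Icc_subset_Icc_right hb'b)
  obtain ⟨a', ⟨⟨haa', ha'b'⟩, hpa'⟩, ha'_greatest⟩ :
      ∃ a', IsGreatest (Icc a b' ∩ f ⁻¹' Ici p) a' :=
    (isCompact_Icc.of_isClosed_subset
      (hcont'.preimage_isClosed_of_isClosed isClosed_Icc isClosed_Ici)
      inter_subset_left).exists_isGreatest ⟨a, left_mem_Icc.2 hab', ha⟩
  have ha'_lt_b' : a' < b' :=
    ha'b'.lt_of_ne fun h => (hqp.trans_le hpa').not_ge (h ▸ hqb')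
  refine ⟨a', b', haa', ha'_lt_b', hb'b, hpa', hqb', fun t ht => ⟨?_, ?_⟩⟩
  · exact not_le.1 fun h => (hb'_least ⟨⟨haa'.trans ht.1.le, ht.2.le.trans hb'b⟩, h⟩).not_gt ht.2
  · exact not_le.1 fun h => (ha'_greatest ⟨⟨haa'.trans ht.1.le, ht.2.le⟩, h⟩).not_gt ht.1

theorem sub_le_integral_of_le_deriv_of_mem_Ioo {z z' φ : ℝ → ℝ} {a b p q : ℝ} (hab : a ≤ b)
    (hqp : q < p) (hz : ContinuousOn z (Icc a b)) (hz' : ∀ t ∈ Ioo a b, HasDerivAt z (z' t) t)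
    (ha : p ≤ z a) (hb : z b ≤ q) (hφ : IntegrableOn φ (Icc a b))
    (hφ_nonneg : ∀ t ∈ Icc a b, 0 ≤ φ t) (hband : ∀ t ∈ Ioo a b, z t ∈ Ioo q p → -φ t ≤ z' t) :
    p - q ≤ ∫ t in a..b, φ t := by
  obtain ⟨a', b', haa', ha'b', hb'b, hpa', hqb', hmaps⟩ :=
    exists_Ioo_mapsTo_Ioo_of_continuousOn hab hz hqp ha hb
  have hsub : Icc a' b' ⊆ Icc a b := Icc_subset_Icc haa' hb'b
  have hfall : -z b' - -z a' ≤ ∫ t in a'..b', φ t :=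
    intervalIntegral.sub_le_integral_of_hasDeriv_right_of_le ha'b'.le (hz.mono hsub).neg
      (fun t ht => (hz' t (Ioo_subset_Ioo haa' hb'b ht)).neg.hasDerivWithinAt)
      (hφ.mono_set hsub) (fun t ht => neg_le.1 (hband t (Ioo_subset_Ioo haa' hb'b ht) (hmaps ht)))
  have hmono : ∫ t in a'..b', φ t ≤ ∫ t in a..b, φ t :=
    intervalIntegral.integral_mono_interval haa' ha'b'.le hb'b
      ((ae_restrict_mem measurableSet_Ioc).mono fun t ht => hφ_nonneg t (Ioc_subset_Icc_self ht))
      ((intervalIntegrable_iff_integrableOn_Icc_of_le hab).2 hφ)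
  linarith

theorem sub_le_integral_of_tendsto_atTop_atBot {z z' φ : ℝ → ℝ} {a b p q : ℝ} (hab : a < b)
    (hqp : q < p) (hz' : ∀ t ∈ Ioo a b, HasDerivAt z (z' t) t)
    (hza : Tendsto z (𝓝[>] a) atTop) (hzb : Tendsto z (𝓝[<] b) atBot)
    (hφ : IntegrableOn φ (Icc a b)) (hφ_nonneg : ∀ t ∈ Icc a b, 0 ≤ φ t)
    (hband : ∀ t ∈ Ioo a b, z t ∈ Ioo q p → -φ t ≤ z' t) :
    p - q ≤ ∫ t in a..b, φ t := by
  obtain ⟨a₀, hpa₀, ha₀⟩ := ((hza.eventually_ge_atTop p).and (Ioo_mem_nhdsGT hab)).exists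
  obtain ⟨b₀, hqb₀, hb₀⟩ := ((hzb.eventually_le_atBot q).and (Ioo_mem_nhdsLT ha₀.2)).exists
  have hsub : Icc a₀ b₀ ⊆ Ioo a b := Icc_subset_Ioo ha₀.1 hb₀.2
  have hfall : p - q ≤ ∫ t in a₀..b₀, φ t :=
    sub_le_integral_of_le_deriv_of_mem_Ioo hb₀.1.le hqp
      (fun t ht => (hz' t (hsub ht)).continuousAt.continuousWithinAt)
      (fun t ht => hz' t (hsub (Ioo_subset_Icc_self ht))) hpa₀ hqb₀
      (hφ.mono_set (hsub.trans Ioo_subset_Icc_self))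
      (fun t ht => hφ_nonneg t (Ioo_subset_Icc_self (hsub ht)))
      (fun t ht => hband t (hsub (Ioo_subset_Icc_self ht)))
  have hmono : ∫ t in a₀..b₀, φ t ≤ ∫ t in a..b, φ t :=
    intervalIntegral.integral_mono_interval ha₀.1.le hb₀.1.le hb₀.2.le
      ((ae_restrict_mem measurableSet_Ioc).mono fun t ht => hφ_nonneg t (Ioc_subset_Icc_self ht))
      ((intervalIntegrable_iff_integrableOn_Icc_of_le hab.le).2 hφ)
  linarith

theorem tendsto_nhdsGT_zero_of_continuousAt {y : ℝ → ℝ} {x₀ : ℝ} {l : Filter ℝ}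
    (hl : l ≤ 𝓝 x₀) (hy : ContinuousAt y x₀) (hy₀ : y x₀ = 0) (hpos : ∀ᶠ x in l, 0 < y x) :
    Tendsto y l (𝓝[>] 0) :=
  tendsto_nhdsWithin_of_tendsto_nhds_of_eventually_within _ (hy₀ ▸ hy.tendsto.mono_left hl) hpos

theorem neg_mul_le_riccati_deriv {c t m y yd ydd : ℝ} (ht : 0 < t) (hy : y ≠ 0)
    (hode : -ydd + c / t ^ 2 * y = m * y) (hband : (2 * (t * yd / y) - 1) ^ 2 < 4 * c + 1) :
    -(t * m) ≤ ((1 * yd + t * ydd) * y - t * yd * yd) / y ^ 2 := by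
  have hriccati : ((1 * yd + t * ydd) * y - t * yd * yd) / y ^ 2
      = -(t * m) + (4 * c + 1 - (2 * (t * yd / y) - 1) ^ 2) / (4 * t) := by
    rw [show ydd = (c / t ^ 2 - m) * y by linarith]
    field_simp
    ring
  have hgap : 0 ≤ (4 * c + 1 - (2 * (t * yd / y) - 1) ^ 2) / (4 * t) :=
    div_nonneg (by linarith) (by positivity)
  linarith

theorem bargmann_core_estimate_general
    (c x₁ x₂ : ℝ) (hc : 0 ≤ c) (hx₁ : 0 < x₁) (hx₁₂ : x₁ < x₂)
    (M y yd ydd : ℝ → ℝ)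
    (hM : ContinuousOn M (Set.Icc x₁ x₂))
    (hM0 : ∀ x ∈ Set.Icc x₁ x₂, 0 ≤ M x)
    (hy : ∀ x ∈ Set.Icc x₁ x₂, HasDerivAt y (yd x) x)
    (hyd : ∀ x ∈ Set.Icc x₁ x₂, HasDerivAt yd (ydd x) x)
    (hy1 : y x₁ = 0) (hy2 : y x₂ = 0)
    (hypos : ∀ x ∈ Set.Ioo x₁ x₂, 0 < y x)
    (hyd1 : 0 < yd x₁) (hyd2 : yd x₂ < 0)
    (hode : ∀ x ∈ Set.Icc x₁ x₂, -ydd x + (c / x ^ 2) * y x = M x * y x) :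
    Real.sqrt (4 * c + 1) ≤ ∫ x in x₁..x₂, x * M x := by
  set s := Real.sqrt (4 * c + 1)
  have hs : 0 < s := Real.sqrt_pos.2 (by linarith)
  have hs2 : s ^ 2 = 4 * c + 1 := Real.sq_sqrt (by linarith)
  have hx₁_mem : x₁ ∈ Icc x₁ x₂ := left_mem_Icc.2 hx₁₂.le
  have hx₂_mem : x₂ ∈ Icc x₁ x₂ := right_mem_Icc.2 hx₁₂.le
  have hnum : ∀ x ∈ Icc x₁ x₂, Tendsto (fun t => t * yd t) (𝓝 x) (𝓝 (x * yd x)) :=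
    fun x hx => (continuousAt_id.mul (hyd x hx).continuousAt).tendsto
  have hy_right : Tendsto y (𝓝[>] x₁) (𝓝[>] 0) :=
    tendsto_nhdsGT_zero_of_continuousAt nhdsWithin_le_nhds (hy x₁ hx₁_mem).continuousAt hy1
      (eventually_of_mem (Ioo_mem_nhdsGT hx₁₂) hypos)
  have hy_left : Tendsto y (𝓝[<] x₂) (𝓝[>] 0) :=
    tendsto_nhdsGT_zero_of_continuousAt nhdsWithin_le_nhds (hy x₂ hx₂_mem).continuousAt hy2
      (eventually_of_mem (Ioo_mem_nhdsLT hx₁₂) hypos)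
  have hfall := sub_le_integral_of_tendsto_atTop_atBot (p := 1 / 2 + s / 2) (q := 1 / 2 - s / 2)
    (z := fun t => t * yd t / y t) (φ := fun t => t * M t) hx₁₂ (by linarith)
    (fun t ht => ((hasDerivAt_id' t).mul (hyd t (Ioo_subset_Icc_self ht))).div
      (hy t (Ioo_subset_Icc_self ht)) (hypos t ht).ne')
    (((hnum x₁ hx₁_mem).mono_left nhdsWithin_le_nhds).div_nhdsGT_zero_atTop
      (mul_pos hx₁ hyd1) hy_right)
    (((hnum x₂ hx₂_mem).mono_left nhdsWithin_le_nhds).div_nhdsGT_zero_atBot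
      (mul_neg_of_pos_of_neg (hx₁.trans hx₁₂) hyd2) hy_left)
    (continuousOn_id.mul hM).integrableOn_Icc
    (fun t ht => mul_nonneg (hx₁.trans_le ht.1).le (hM0 t ht))
    (fun t ht hzt => neg_mul_le_riccati_deriv (hx₁.trans ht.1) (hypos t ht).ne'
      (hode t (Ioo_subset_Icc_self ht))
      (hs2 ▸ sq_lt_sq' (by linarith [hzt.1]) (by linarith [hzt.2])))
  linarith

/-- Quantitative core of the Bargmann-type bound: if a positive solution of
`−y'' + (c/x²)y = M·y` vanishes at two consecutive points `x₁ < x₂`, then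
`∫_{x₁}^{x₂} x·M(x) dx ≥ √(4c + 1)`. -/
theorem bargmann_core_estimate
    (c x₁ x₂ : ℝ) (hc : 0 ≤ c) (hx₁ : 0 < x₁) (hx₁₂ : x₁ < x₂)
    (M y yd ydd : ℝ → ℝ)
    (hM : ContinuousOn M (Set.Icc x₁ x₂))
    (hM0 : ∀ x ∈ Set.Icc x₁ x₂, 0 ≤ M x)
    (hy : ∀ x ∈ Set.Icc x₁ x₂, HasDerivAt y (yd x) x)
    (hyd : ∀ x ∈ Set.Icc x₁ x₂, HasDerivAt yd (ydd x) x)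
    (hydd : ContinuousOn ydd (Set.Icc x₁ x₂))
    (hy1 : y x₁ = 0) (hy2 : y x₂ = 0)
    (hypos : ∀ x ∈ Set.Ioo x₁ x₂, 0 < y x)
    (hyd1 : 0 < yd x₁) (hyd2 : yd x₂ < 0)
    (hode : ∀ x ∈ Set.Icc x₁ x₂, -ydd x + (c / x ^ 2) * y x = M x * y x) :
    Real.sqrt (4 * c + 1) ≤ ∫ x in x₁..x₂, x * M x :=
  bargmann_core_estimate_general c x₁ x₂ hc hx₁ hx₁₂ M y yd ydd hM hM0 hy hyd hy1 hy2 hypos hyd1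
    hyd2 hode
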